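/- Let B ⊆ P_n be a set of partitions. Then the smallest symmetric strongly shifted ideal containing {x^λ : λ ∈ B} equals the ideal generated by all monomials σ(x^μ) with σ ∈ 𝔖_n, μ ∈ P_n, for which there exists λ ∈ B with |λ| = |μ| and μ ⊴ λ in the dominance order. -/

import Mathlib

open MvPolynomial

/-- The monomial `x^a` in `K[x_1,...,x_n]`. -/
noncomputable def mon (K : Type) [Field K] (n : ℕ) (a : Fin n → ℕ) :
    MvPolynomial (Fin n) K :=
  monomial (Finsupp.equivFunOnFinite.symm a) 1

/-- A monomial ideal: an ideal generated by monomials. -/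
def IsMonomialIdeal (K : Type) [Field K] (n : ℕ)
    (I : Ideal (MvPolynomial (Fin n) K)) : Prop :=
  ∃ S : Set (Fin n → ℕ), I = Ideal.span (mon K n '' S)

/-- A symmetric (`𝔖_n`-fixed) ideal. -/
def IsSymmetricIdeal (K : Type) [Field K] (n : ℕ)
    (I : Ideal (MvPolynomial (Fin n) K)) : Prop :=
  ∀ σ : Equiv.Perm (Fin n), Ideal.map (rename (σ : Fin n → Fin n)) I = I

/-- The exponent vector obtained from `a` by the Borel move `x^a ↦ x^a · x_i / x_j`. -/
def borelMoveVec (n : ℕ) (a : Fin n → ℕ) (i j : Fin n) : Fin n → ℕ :=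
  fun k => if k = i then a k + 1 else if k = j then a k - 1 else a k

/-- A symmetric strongly shifted ideal (sssi). -/
def IsSSSI (K : Type) [Field K] (n : ℕ)
    (I : Ideal (MvPolynomial (Fin n) K)) : Prop :=
  IsMonomialIdeal K n I ∧ IsSymmetricIdeal K n I ∧
    ∀ lam : Fin n → ℕ, Monotone lam → mon K n lam ∈ I →
      ∀ i j : Fin n, i < j → lam i < lam j →
        mon K n (borelMoveVec n lam i j) ∈ I

/-- The dominance order on partitions: `μ ⊴ λ`. -/
def dominates (n : ℕ) (μ lam : Fin n → ℕ) : Prop :=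
  ∀ k : Fin n, ∑ i ∈ Finset.Ici k, μ i ≤ ∑ i ∈ Finset.Ici k, lam i

/-- `Sss(B)`: the smallest symmetric strongly shifted ideal containing the
monomials `x^λ`, `λ ∈ B`. -/
noncomputable def Sss (K : Type) [Field K] (n : ℕ) (B : Set (Fin n → ℕ)) :
    Ideal (MvPolynomial (Fin n) K) :=
  sInf {J | IsSSSI K n J ∧ ∀ lam ∈ B, mon K n lam ∈ J}

/-! Write `T_k(a) = ∑_{i ≥ k} a_i` for the tail sums, so that `μ ⊴ λ` means `T_k(μ) ≤ T_k(λ)` for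
all `k`, and a Borel move `x_P / x_Q` with `P < Q` lowers `T_k` by one exactly for `P < k ≤ Q`.

The ideal spanned by the proposed generators is a symmetric monomial ideal. It is strongly
shifted: a Borel move of a partition `μ` between values `μ_p < μ_q` is a rearrangement of `μ`
when `μ_q = μ_p + 1`, and otherwise a rearrangement of the move from the first occurrence of
`μ_q` to the last occurrence of `μ_p`, which is again a partition with smaller tail sums.

Conversely let `μ ⊴ λ`, `μ ≠ λ`. On a maximal interval `(p, q]` where `T_k(μ) < T_k(λ)` one has
`λ_p < μ_p ≤ μ_q < λ_q`, so `λ` admits a Borel move inside `[p, q]` that keeps it a partition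
and keeps it above `μ`, while lowering `∑_k T_k(λ)`. By induction `x^μ` lies in every strongly
shifted ideal containing `x^λ`. -/

section Combinatorics

variable {n : ℕ}

-- Indexed by `k : ℕ` rather than `Fin n`, so that the empty tail `k = n` is available.
def tailSum (a : Fin n → ℕ) (k : ℕ) : ℕ :=
  ∑ i ∈ Finset.univ.filter (fun i : Fin n => k ≤ (i : ℕ)), a i

lemma tailSum_eq_sum_Ici (a : Fin n → ℕ) (k : Fin n) :
    tailSum a k = ∑ i ∈ Finset.Ici k, a i := by
  unfold tailSum
  congr 1
  ext i
  simp only [Finset.mem_filter, Finset.mem_univ, true_and, Finset.mem_Ici, Fin.le_def]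

lemma tailSum_zero (a : Fin n → ℕ) : tailSum a 0 = ∑ i, a i := by
  simp [tailSum]

lemma tailSum_of_le {k : ℕ} (hk : n ≤ k) (a : Fin n → ℕ) : tailSum a k = 0 :=
  Finset.sum_eq_zero fun i hi => by
    have := i.isLt
    simp only [Finset.mem_filter] at hi
    omega

lemma tailSum_eq_add {k : ℕ} (hk : k < n) (a : Fin n → ℕ) :
    tailSum a k = a ⟨k, hk⟩ + tailSum a (k + 1) := by
  unfold tailSum
  have hins : Finset.univ.filter (fun i : Fin n => k ≤ (i : ℕ))
      = insert ⟨k, hk⟩ (Finset.univ.filter (fun i : Fin n => k + 1 ≤ (i : ℕ))) := by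
    ext i
    simp [Fin.ext_iff]
    omega
  rw [hins, Finset.sum_insert (by simp)]

lemma tailSum_injective : Function.Injective (tailSum : (Fin n → ℕ) → ℕ → ℕ) := by
  intro a b h
  funext i
  have ha := tailSum_eq_add i.isLt a
  have hb := tailSum_eq_add i.isLt b
  simp only [Fin.eta] at ha hb
  have := congrFun h i
  have := congrFun h (i + 1)
  omega

lemma dominates_iff_tailSum_le (μ lam : Fin n → ℕ) :
    dominates n μ lam ↔ ∀ k, tailSum μ k ≤ tailSum lam k := by
  refine ⟨fun h k => ?_, fun h k => ?_⟩
  · rcases lt_or_ge k n with hk | hk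
    · simpa only [← tailSum_eq_sum_Ici] using h ⟨k, hk⟩
    · simp [tailSum_of_le hk]
  · simpa only [← tailSum_eq_sum_Ici] using h k

lemma borelMoveVec_add_ite {a : Fin n → ℕ} {P Q : Fin n} (hPQ : P ≠ Q) (hQ : 1 ≤ a Q)
    (i : Fin n) :
    borelMoveVec n a P Q i + (if i = Q then 1 else 0) = a i + (if i = P then 1 else 0) := by
  unfold borelMoveVec
  split_ifs <;> simp_all

lemma tailSum_borelMoveVec {a : Fin n → ℕ} {P Q : Fin n} (hPQ : P < Q) (hQ : 1 ≤ a Q) (k : ℕ) :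
    tailSum (borelMoveVec n a P Q) k + (if (P : ℕ) < k ∧ k ≤ Q then 1 else 0) = tailSum a k := by
  have h := Finset.sum_congr (s₁ := Finset.univ.filter (fun i : Fin n => k ≤ (i : ℕ))) rfl
    fun i _ => borelMoveVec_add_ite hPQ.ne hQ i
  simp only [Finset.sum_add_distrib, Finset.sum_ite_eq', Finset.mem_filter,
    Finset.mem_univ, true_and] at h
  rw [← tailSum, ← tailSum] at h
  have := Fin.lt_def.mp hPQ
  split_ifs at h ⊢ <;> omega

lemma sum_borelMoveVec {a : Fin n → ℕ} {P Q : Fin n} (hPQ : P < Q) (hQ : 1 ≤ a Q) :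
    ∑ i, borelMoveVec n a P Q i = ∑ i, a i := by
  simpa [tailSum_zero] using tailSum_borelMoveVec hPQ hQ 0

lemma borelMoveVec_comp_perm (a : Fin n → ℕ) (σ : Equiv.Perm (Fin n)) (i j : Fin n) :
    borelMoveVec n (a ∘ σ) i j = borelMoveVec n a (σ i) (σ j) ∘ σ := by
  funext k
  simp only [borelMoveVec, Function.comp_apply, EmbeddingLike.apply_eq_iff_eq]

lemma comp_swap_of_eq {a : Fin n → ℕ} {i j : Fin n} (h : a i = a j) :
    a ∘ Equiv.swap i j = a := by
  funext k
  rw [Function.comp_apply, Equiv.swap_apply_def]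
  split_ifs <;> simp_all

lemma borelMoveVec_eq_comp_swap {a : Fin n → ℕ} {i j : Fin n} (h : a j = a i + 1) :
    borelMoveVec n a i j = a ∘ Equiv.swap i j := by
  funext k
  rw [Function.comp_apply, Equiv.swap_apply_def]
  unfold borelMoveVec
  split_ifs <;> simp_all

lemma borelMoveVec_mono {a b : Fin n → ℕ} (h : a ≤ b) (i j : Fin n) :
    borelMoveVec n a i j ≤ borelMoveVec n b i j := fun k => by
  have : a k ≤ b k := h k
  simp only [borelMoveVec]
  split_ifs <;> omega

lemma le_borelMoveVec {a b : Fin n → ℕ} (h : a ≤ b) {i j : Fin n} (hij : i ≠ j)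
    (hj : a j < b j) : a ≤ borelMoveVec n b i j := fun k => by
  have : a k ≤ b k := h k
  simp only [borelMoveVec]
  split_ifs <;> subst_vars <;> omega

lemma monotone_borelMoveVec {a : Fin n → ℕ} (ha : Monotone a) {P Q : Fin n}
    (hP : ∀ k, P < k → a P < a k) (hQ : ∀ k, k < Q → a k < a Q) (hPQ : a P + 2 ≤ a Q) :
    Monotone (borelMoveVec n a P Q) := by
  intro x y hxy
  rcases hxy.eq_or_lt with rfl | hlt
  · rfl
  have hle := ha hxy
  unfold borelMoveVec
  split_ifs <;> subst_vars
  all_goals first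
    | omega
    | have := hP _ hlt; omega
    | have := hQ _ hlt; omega

lemma exists_monotone_borelMoveVec {a : Fin n → ℕ} (ha : Monotone a) {p q : Fin n}
    (h : a p + 2 ≤ a q) :
    ∃ P Q, P < Q ∧ p ≤ P ∧ Q ≤ q ∧ a P = a p ∧ a Q = a q ∧
      Monotone (borelMoveVec n a P Q) := by
  classical
  set P := (Finset.univ.filter (a · = a p)).max' ⟨p, by simp⟩
  set Q := (Finset.univ.filter (a · = a q)).min' ⟨q, by simp⟩
  have hPv : a P = a p := by simpa using Finset.max'_mem (Finset.univ.filter (a · = a p)) _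
  have hQv : a Q = a q := by simpa using Finset.min'_mem (Finset.univ.filter (a · = a q)) _
  have hP : ∀ k, P < k → a P < a k := fun k hk =>
    (ha hk.le).lt_of_ne fun he =>
      hk.not_ge (Finset.le_max' _ k (by simp [← he, hPv]))
  have hQ : ∀ k, k < Q → a k < a Q := fun k hk =>
    (ha hk.le).lt_of_ne fun he =>
      hk.not_ge (Finset.min'_le _ k (by simp [he, hQv]))
  refine ⟨P, Q, ha.reflect_lt (by omega), Finset.le_max' _ p (by simp),
    Finset.min'_le _ q (by simp), hPv, hQv, monotone_borelMoveVec ha hP hQ (by omega)⟩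

lemma exists_maximal_gap {E : ℕ → Prop} {k m : ℕ} (h0 : E 0) (hk : ¬E k) (hm : E m)
    (hkm : k ≤ m) :
    ∃ p q, p < q ∧ q < m ∧ E p ∧ E (q + 1) ∧ ∀ j, p < j → j ≤ q → ¬E j := by
  classical
  have hex : ∃ r, k ≤ r ∧ E r := ⟨m, hkm, hm⟩
  set p := Nat.findGreatest E k
  set r := Nat.find hex
  have hp : E p := Nat.findGreatest_spec (Nat.zero_le k) h0
  have hpk : p ≤ k := Nat.findGreatest_le k
  have hkr : k ≤ r := (Nat.find_spec hex).1
  have hpk' : p ≠ k := fun h => hk (h ▸ hp)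
  have hkr' : r ≠ k := fun h => hk (h ▸ (Nat.find_spec hex).2)
  refine ⟨p, r - 1, by omega, by have := Nat.find_min' hex ⟨hkm, hm⟩; omega, hp,
    by rw [Nat.sub_add_cancel (by omega)]; exact (Nat.find_spec hex).2, fun j hpj hjr hj => ?_⟩
  rcases le_or_gt j k with hjk | hkj
  · exact Nat.findGreatest_is_greatest hpj hjk hj
  · exact Nat.find_min hex (by omega) ⟨hkj.le, hj⟩

lemma exists_borelMove_of_dominates {μ lam : Fin n → ℕ} (hμ : Monotone μ)
    (hlam : Monotone lam) (hsum : ∑ i, lam i = ∑ i, μ i)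
    (hdom : ∀ k, tailSum μ k ≤ tailSum lam k) (hne : μ ≠ lam) :
    ∃ P Q, P < Q ∧ lam P < lam Q ∧ Monotone (borelMoveVec n lam P Q) ∧
      ∀ k, tailSum μ k ≤ tailSum (borelMoveVec n lam P Q) k := by
  obtain ⟨k, hk⟩ : ∃ k, tailSum μ k ≠ tailSum lam k := by
    by_contra! h
    exact hne (tailSum_injective (funext h))
  have hkn : k ≤ n := by
    by_contra! h
    simp [tailSum_of_le h.le] at hk
  obtain ⟨p, q, hpq, hqn, hp, hq, hgap⟩ :=
    exists_maximal_gap (E := fun k => tailSum μ k = tailSum lam k)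
      (by simp [tailSum_zero, hsum]) hk (by simp [tailSum_of_le le_rfl]) hkn
  have hstrict : ∀ j, p < j → j ≤ q → tailSum μ j < tailSum lam j := fun j h1 h2 =>
    (hdom j).lt_of_ne (hgap j h1 h2)
  have hpn : p < n := by omega
  -- `λ_p < μ_p ≤ μ_q < λ_q`, read off from the tail sums at both ends of the gap
  have hgap2 : lam ⟨p, hpn⟩ + 2 ≤ lam ⟨q, hqn⟩ := by
    have := tailSum_eq_add hpn μ
    have := tailSum_eq_add hpn lam
    have := tailSum_eq_add hqn μ
    have := tailSum_eq_add hqn lam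
    have := hstrict (p + 1) (by omega) (by omega)
    have := hstrict q hpq le_rfl
    have : μ ⟨p, hpn⟩ ≤ μ ⟨q, hqn⟩ := hμ (Fin.le_def.2 hpq.le)
    omega
  obtain ⟨P, Q, hPQ, hpP, hQq, hPv, hQv, hmono⟩ := exists_monotone_borelMoveVec hlam hgap2
  refine ⟨P, Q, hPQ, by omega, hmono, fun j => ?_⟩
  have hmove := tailSum_borelMoveVec hPQ (by omega : 1 ≤ lam Q) j
  have := hdom j
  have hpP' : p ≤ P := hpP
  have hQq' : (Q : ℕ) ≤ q := hQq
  split_ifs at hmove with hj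
  · have := hstrict j (by omega) (by omega)
    omega
  · omega

def dominanceDownset (B : Set (Fin n → ℕ)) : Set (Fin n → ℕ) :=
  {μ | Monotone μ ∧ ∃ lam ∈ B, ∑ i, lam i = ∑ i, μ i ∧ dominates n μ lam}

def rearrangements (T : Set (Fin n → ℕ)) : Set (Fin n → ℕ) :=
  {a | ∃ μ ∈ T, ∃ σ : Equiv.Perm (Fin n), a = μ ∘ σ}

lemma borelMoveVec_mem_dominanceDownset {B : Set (Fin n → ℕ)} {μ : Fin n → ℕ}
    (hμ : μ ∈ dominanceDownset B) {P Q : Fin n} (hPQ : P < Q) (hQ : 1 ≤ μ Q)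
    (hmono : Monotone (borelMoveVec n μ P Q)) :
    borelMoveVec n μ P Q ∈ dominanceDownset B := by
  obtain ⟨-, lam, hlam, hsum, hdom⟩ := hμ
  refine ⟨hmono, lam, hlam, hsum.trans (sum_borelMoveVec hPQ hQ).symm, ?_⟩
  rw [dominates_iff_tailSum_le] at hdom ⊢
  intro k
  have := tailSum_borelMoveVec hPQ hQ k
  have := hdom k
  omega

lemma comp_mem_rearrangements {T : Set (Fin n → ℕ)} {a : Fin n → ℕ} (ha : a ∈ rearrangements T)
    (τ : Equiv.Perm (Fin n)) : a ∘ τ ∈ rearrangements T := by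
  obtain ⟨μ, hμ, σ, rfl⟩ := ha
  exact ⟨μ, hμ, σ * τ, rfl⟩

lemma borelMoveVec_mem_rearrangements {B : Set (Fin n → ℕ)} {a : Fin n → ℕ}
    (ha : a ∈ rearrangements (dominanceDownset B)) {i j : Fin n} (hij : a i < a j) :
    borelMoveVec n a i j ∈ rearrangements (dominanceDownset B) := by
  obtain ⟨μ, hμ, σ, rfl⟩ := ha
  rw [borelMoveVec_comp_perm]
  refine comp_mem_rearrangements ?_ σ
  set p := σ i
  set q := σ j
  change μ p < μ q at hij
  rcases (Nat.succ_le_of_lt hij).eq_or_lt with hsucc | hgap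
  · exact ⟨μ, hμ, Equiv.swap p q, borelMoveVec_eq_comp_swap hsucc.symm⟩
  obtain ⟨P, Q, hPQ, -, -, hPv, hQv, hmono⟩ := exists_monotone_borelMoveVec hμ.1 hgap
  set τ := Equiv.swap p P * Equiv.swap q Q
  have hτ : μ ∘ τ = μ := by
    rw [Equiv.Perm.coe_mul, ← Function.comp_assoc, comp_swap_of_eq hPv.symm,
      comp_swap_of_eq hQv.symm]
  have hpq : p ≠ q := ne_of_apply_ne μ (by omega)
  have hpQ : p ≠ Q := ne_of_apply_ne μ (by omega)
  have hQP : Q ≠ P := ne_of_apply_ne μ (by omega)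
  have hτp : τ p = P := by
    rw [Equiv.Perm.mul_apply, Equiv.swap_apply_of_ne_of_ne hpq hpQ, Equiv.swap_apply_left]
  have hτq : τ q = Q := by
    rw [Equiv.Perm.mul_apply, Equiv.swap_apply_left,
      Equiv.swap_apply_of_ne_of_ne hpQ.symm hQP]
  refine ⟨_, borelMoveVec_mem_dominanceDownset hμ hPQ (by omega) hmono, τ, ?_⟩
  conv_lhs => rw [← hτ]
  rw [borelMoveVec_comp_perm, hτp, hτq]

end Combinatorics

section Ideals

variable {K : Type} [Field K] {n : ℕ}

def IsStronglyShifted (K : Type) [Field K] (n : ℕ) (I : Ideal (MvPolynomial (Fin n) K)) :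
    Prop :=
  ∀ lam : Fin n → ℕ, Monotone lam → mon K n lam ∈ I →
    ∀ i j : Fin n, i < j → lam i < lam j → mon K n (borelMoveVec n lam i j) ∈ I

lemma rename_mon (σ : Equiv.Perm (Fin n)) (a : Fin n → ℕ) :
    rename σ (mon K n a) = mon K n (a ∘ ⇑σ⁻¹) := by
  unfold mon
  rw [rename_monomial]
  refine congrArg (monomial · (1 : K)) (Finsupp.ext fun b => ?_)
  rw [Finsupp.mapDomain_equiv_apply]
  simp [Equiv.Perm.inv_def]

lemma mon_mem_span_mon_image_iff (S : Set (Fin n → ℕ)) (a : Fin n → ℕ) :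
    mon K n a ∈ Ideal.span (mon K n '' S) ↔ ∃ g ∈ S, g ≤ a := by
  classical
  rw [show mon K n '' S = (monomial · 1) '' (Finsupp.equivFunOnFinite.symm '' S) by
      rw [Set.image_image]; rfl,
    mem_ideal_span_monomial_image]
  simp only [mon, support_monomial, one_ne_zero, if_false, Finset.mem_singleton,
    forall_eq, Set.exists_mem_image]
  refine exists_congr fun g => and_congr_right fun _ => ?_
  simp [Finsupp.le_def, Pi.le_def]

lemma mon_comp_perm_mem {J : Ideal (MvPolynomial (Fin n) K)} (hJ : IsSymmetricIdeal K n J)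
    {μ : Fin n → ℕ} (hμ : mon K n μ ∈ J) (σ : Equiv.Perm (Fin n)) : mon K n (μ ∘ σ) ∈ J := by
  rw [← hJ σ⁻¹, ← inv_inv σ, ← rename_mon]
  exact Ideal.mem_map_of_mem _ hμ

lemma mon_mem_of_dominates {J : Ideal (MvPolynomial (Fin n) K)} (hJ : IsStronglyShifted K n J)
    {μ : Fin n → ℕ} (hμ : Monotone μ) (lam : Fin n → ℕ) (hlam : Monotone lam)
    (hsum : ∑ i, lam i = ∑ i, μ i) (hdom : dominates n μ lam) (hmem : mon K n lam ∈ J) :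
    mon K n μ ∈ J := by
  induction hm : ∑ k ∈ Finset.range n, tailSum lam k using Nat.strong_induction_on
    generalizing lam with
  | _ m ih =>
  rw [dominates_iff_tailSum_le] at hdom
  by_cases hne : μ = lam
  · rwa [hne]
  obtain ⟨P, Q, hPQ, hlt, hmono, hdom'⟩ := exists_borelMove_of_dominates hμ hlam hsum hdom hne
  have hQ : 1 ≤ lam Q := by omega
  have hmove := tailSum_borelMoveVec hPQ hQ
  refine ih _ ?_ _ hmono ((sum_borelMoveVec hPQ hQ).trans hsum)
    ((dominates_iff_tailSum_le _ _).2 hdom') (hJ lam hlam hmem P Q hPQ hlt) rfl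
  rw [← hm]
  refine Finset.sum_lt_sum (fun k _ => by have := hmove k; omega)
    ⟨Q, Finset.mem_range.2 Q.isLt, ?_⟩
  have := hmove Q
  rw [if_pos ⟨hPQ, le_rfl⟩] at this
  omega

lemma isSymmetricIdeal_span_mon_image {S : Set (Fin n → ℕ)}
    (hS : ∀ a ∈ S, ∀ σ : Equiv.Perm (Fin n), a ∘ σ ∈ S) :
    IsSymmetricIdeal K n (Ideal.span (mon K n '' S)) := by
  intro τ
  rw [Ideal.map_span, Set.image_image]
  congr 1
  ext f
  constructor
  · rintro ⟨a, ha, rfl⟩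
    exact ⟨a ∘ ⇑τ⁻¹, hS a ha _, (rename_mon τ a).symm⟩
  · rintro ⟨a, ha, rfl⟩
    refine ⟨a ∘ τ, hS a ha τ, ?_⟩
    change rename τ (mon K n (a ∘ τ)) = mon K n a
    rw [rename_mon, Function.comp_assoc, ← Equiv.Perm.coe_mul, mul_inv_cancel,
      Equiv.Perm.coe_one, Function.comp_id]

lemma isStronglyShifted_span_mon_image {S : Set (Fin n → ℕ)}
    (hS : ∀ a ∈ S, ∀ i j, a i < a j → borelMoveVec n a i j ∈ S) :
    IsStronglyShifted K n (Ideal.span (mon K n '' S)) := by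
  intro lam _ hmem i j hij hlt
  rw [mon_mem_span_mon_image_iff] at hmem ⊢
  obtain ⟨g, hg, hle⟩ := hmem
  rcases (hle j).lt_or_eq with hj | hj
  · exact ⟨g, hg, le_borelMoveVec hle hij.ne hj⟩
  · exact ⟨_, hS g hg i j (lt_of_le_of_lt (hle i) (hj ▸ hlt)), borelMoveVec_mono hle i j⟩

lemma setOf_rename_mon_eq_image (B : Set (Fin n → ℕ)) :
    {f | ∃ (σ : Equiv.Perm (Fin n)) (μ : Fin n → ℕ), Monotone μ ∧
        (∃ lam ∈ B, ∑ i, lam i = ∑ i, μ i ∧ dominates n μ lam) ∧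
        f = rename (σ : Fin n → Fin n) (mon K n μ)} =
      mon K n '' rearrangements (dominanceDownset B) := by
  ext f
  constructor
  · rintro ⟨σ, μ, hμ, hdom, rfl⟩
    exact ⟨μ ∘ ⇑σ⁻¹, ⟨μ, ⟨hμ, hdom⟩, σ⁻¹, rfl⟩, (rename_mon σ μ).symm⟩
  · rintro ⟨_, ⟨μ, ⟨hμ, hdom⟩, σ, rfl⟩, rfl⟩
    exact ⟨σ⁻¹, μ, hμ, hdom, by rw [rename_mon, inv_inv]⟩

lemma isSSSI_span_rearrangements_dominanceDownset (B : Set (Fin n → ℕ)) :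
    IsSSSI K n (Ideal.span (mon K n '' rearrangements (dominanceDownset B))) :=
  ⟨⟨_, rfl⟩, isSymmetricIdeal_span_mon_image fun _ h σ => comp_mem_rearrangements h σ,
    isStronglyShifted_span_mon_image fun _ h _ _ => borelMoveVec_mem_rearrangements h⟩

lemma span_rearrangements_dominanceDownset_le {B : Set (Fin n → ℕ)}
    (hB : ∀ lam ∈ B, Monotone lam) {J : Ideal (MvPolynomial (Fin n) K)} (hJ : IsSSSI K n J)
    (hBJ : ∀ lam ∈ B, mon K n lam ∈ J) :
    Ideal.span (mon K n '' rearrangements (dominanceDownset B)) ≤ J := by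
  rw [Ideal.span_le]
  rintro _ ⟨_, ⟨μ, ⟨hμ, lam, hlam, hsum, hdom⟩, σ, rfl⟩, rfl⟩
  exact mon_comp_perm_mem hJ.2.1
    (mon_mem_of_dominates hJ.2.2 hμ lam (hB lam hlam) hsum hdom (hBJ lam hlam)) σ

end Ideals

/-- For a set `B ⊆ P_n` of partitions, the smallest symmetric strongly shifted
ideal containing `{x^λ : λ ∈ B}` is generated by all monomials `σ(x^μ)` with
`σ ∈ 𝔖_n`, `μ ∈ P_n`, for which there is a `λ ∈ B` with `|λ| = |μ|` and
`μ ⊴ λ` in the dominance order. -/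
theorem sss_generators (K : Type) [Field K] (n : ℕ) (B : Set (Fin n → ℕ))
    (hB : ∀ lam ∈ B, Monotone lam) :
    Sss K n B =
      Ideal.span {f | ∃ (σ : Equiv.Perm (Fin n)) (μ : Fin n → ℕ), Monotone μ ∧
        (∃ lam ∈ B, ∑ i, lam i = ∑ i, μ i ∧ dominates n μ lam) ∧
        f = rename (σ : Fin n → Fin n) (mon K n μ)} := by
  rw [setOf_rename_mon_eq_image]
  refine le_antisymm (sInf_le ⟨isSSSI_span_rearrangements_dominanceDownset B, fun lam hlam => ?_⟩)
    (le_sInf fun _ ⟨hJ, hBJ⟩ => span_rearrangements_dominanceDownset_le hB hJ hBJ)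
  exact Ideal.subset_span
    ⟨lam, ⟨lam, ⟨hB lam hlam, lam, hlam, rfl, fun _ => le_rfl⟩, 1, rfl⟩, rfl⟩
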